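/- arXiv:2012.00271 — 2 statements merged into one kernel-verified Lean document; each statement's English description precedes it below -/
import Mathlib

section
/- Let $z:\mathbb{R}\to\mathbb{R}$ be continuous and suppose for every $\gamma>0$ there is $R(\gamma)>0$ with $\max\{|z(t)|,|\int_0^t z|\}\le\gamma|t|+R(\gamma)$ for all $t$. For $\epsilon\in(0,1]$ define $M_\epsilon=\int_{-\infty}^0 \exp\big(2s+2\epsilon|\int_s^0 z(\varsigma)d\varsigma|+2\epsilon|z(s)|\big)\,ds$. Then $M_\epsilon$ is finite for every $\epsilon\in(0,1]$, and $\lim_{\epsilon\to0^+} M_\epsilon = \tfrac12$. -/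
open MeasureTheory Filter Real intervalIntegral Topology

/-! The sublinear growth of `z` and of its primitive, with slope `γ = 1/4`, bounds the exponent
by `(2 - ε) s + 4 ε R ≤ s + 4 R` on `s ≤ 0` for all `ε ∈ (0, 1]`. So `exp (s + 4 R)` is an
integrable majorant on `(-∞, 0]`, which gives finiteness, and dominated convergence reduces the
limit to `∫_{-∞}^0 exp (2 s) ds = 1/2`. -/

noncomputable def temperedWeight (z : ℝ → ℝ) (ε s : ℝ) : ℝ :=
  exp (2 * s + 2 * ε * |∫ ς in s..(0:ℝ), z ς| + 2 * ε * |z s|)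

namespace temperedWeight

variable {z : ℝ → ℝ}

theorem continuous (hz : Continuous z) (ε : ℝ) : Continuous (temperedWeight z ε) := by
  have hprim : Continuous fun s => ∫ ς in s..(0:ℝ), z ς := by
    refine (continuous_primitive (μ := volume) (fun a b => hz.intervalIntegrable a b) 0).neg.congr
      fun s => (integral_symm 0 s).symm
  unfold temperedWeight
  fun_prop

theorem tendsto_nhds_zero (z : ℝ → ℝ) (s : ℝ) :
    Tendsto (fun ε => temperedWeight z ε s) (𝓝 0) (𝓝 (exp (2 * s))) := by
  have h : Continuous fun ε => temperedWeight z ε s := by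
    unfold temperedWeight
    fun_prop
  simpa [temperedWeight] using h.tendsto 0

theorem le_exp {ε γ R s : ℝ} (hε : 0 ≤ ε)
    (hR : ∀ t ≤ 0, max |z t| |∫ ς in (0:ℝ)..t, z ς| ≤ γ * |t| + R) (hs : s ≤ 0) :
    temperedWeight z ε s ≤ exp ((2 - 4 * ε * γ) * s + 4 * ε * R) := by
  have hbound := hR s hs
  rw [abs_of_nonpos hs, max_le_iff, integral_symm, abs_neg] at hbound
  refine exp_le_exp.2 ?_
  nlinarith [mul_le_mul_of_nonneg_left hbound.1 hε, mul_le_mul_of_nonneg_left hbound.2 hε]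

theorem le_exp_add {ε R s : ℝ} (hε : ε ∈ Set.Icc (0:ℝ) 1) (hR0 : 0 ≤ R)
    (hR : ∀ t ≤ 0, max |z t| |∫ ς in (0:ℝ)..t, z ς| ≤ 1 / 4 * |t| + R) (hs : s ≤ 0) :
    temperedWeight z ε s ≤ exp (s + 4 * R) :=
  (le_exp hε.1 hR hs).trans <| exp_le_exp.2 <| by
    nlinarith [mul_nonneg (sub_nonneg.2 hε.2) (neg_nonneg.2 hs),
      mul_le_mul_of_nonneg_right hε.2 hR0]

theorem norm_le_exp_add_ae {ε R : ℝ} (hε : ε ∈ Set.Icc (0:ℝ) 1) (hR0 : 0 ≤ R)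
    (hR : ∀ t ≤ 0, max |z t| |∫ ς in (0:ℝ)..t, z ς| ≤ 1 / 4 * |t| + R) :
    ∀ᵐ s ∂volume.restrict (Set.Iic 0), ‖temperedWeight z ε s‖ ≤ exp (s + 4 * R) := by
  filter_upwards [ae_restrict_mem measurableSet_Iic] with s hs
  exact (norm_of_nonneg (exp_pos _).le).trans_le (le_exp_add hε hR0 hR hs)

theorem integrableOn_exp_add_Iic (R : ℝ) :
    IntegrableOn (fun s => exp (s + 4 * R)) (Set.Iic 0) := by
  simp_rw [exp_add]
  exact (integrableOn_exp_Iic 0).mul_const _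

theorem integrableOn_Iic (hz : Continuous z) {ε R : ℝ} (hε : ε ∈ Set.Icc (0:ℝ) 1)
    (hR0 : 0 ≤ R)
    (hR : ∀ t ≤ 0, max |z t| |∫ ς in (0:ℝ)..t, z ς| ≤ 1 / 4 * |t| + R) :
    IntegrableOn (temperedWeight z ε) (Set.Iic 0) :=
  (integrableOn_exp_add_Iic R).mono' (continuous hz ε).aestronglyMeasurable
    (norm_le_exp_add_ae hε hR0 hR)

end temperedWeight

/-- Convergence (3.51): for a continuous `z` with sublinear growth (in the quantitative
form (3.14)), the tempered quantity
`M_ε = ∫_{-∞}^0 exp(2s + 2ε|∫_s^0 z| + 2ε|z(s)|) ds` is finite for every `ε ∈ (0,1]`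
and `M_ε → 1/2` as `ε → 0⁺`. -/
theorem stmt_9 (z : ℝ → ℝ) (hz : Continuous z)
    (hR : ∀ γ : ℝ, 0 < γ → ∃ R : ℝ, 0 < R ∧ ∀ t : ℝ,
      max |z t| |∫ ς in (0:ℝ)..t, z ς| ≤ γ * |t| + R) :
    (∀ ε ∈ Set.Ioc (0:ℝ) 1,
      IntegrableOn
        (fun s => Real.exp (2 * s + 2 * ε * |∫ ς in s..(0:ℝ), z ς| + 2 * ε * |z s|))
        (Set.Iic (0:ℝ))) ∧
    Tendsto
      (fun ε : ℝ =>
        ∫ s in Set.Iic (0:ℝ),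
          Real.exp (2 * s + 2 * ε * |∫ ς in s..(0:ℝ), z ς| + 2 * ε * |z s|))
      (nhdsWithin 0 (Set.Ioi 0)) (nhds (1 / 2)) := by
  obtain ⟨R, hRpos, hRbound⟩ := hR (1 / 4) (by norm_num)
  have hRneg : ∀ t ≤ 0, max |z t| |∫ ς in (0:ℝ)..t, z ς| ≤ 1 / 4 * |t| + R :=
    fun t _ => hRbound t
  refine ⟨fun ε hε =>
    temperedWeight.integrableOn_Iic hz (Set.Ioc_subset_Icc_self hε) hRpos.le hRneg, ?_⟩
  have hlimit : ∫ s in Set.Iic (0:ℝ), exp (2 * s) = 1 / 2 := by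
    rw [integral_exp_mul_Iic two_pos, mul_zero, exp_zero]
  rw [← hlimit]
  refine tendsto_integral_filter_of_dominated_convergence _
    (Eventually.of_forall fun ε => (temperedWeight.continuous hz ε).aestronglyMeasurable)
    ?_ (temperedWeight.integrableOn_exp_add_Iic R)
    (Eventually.of_forall fun s =>
      (temperedWeight.tendsto_nhds_zero z s).mono_left nhdsWithin_le_nhds)
  filter_upwards [Icc_mem_nhdsGT (zero_lt_one' ℝ)] with ε hε
    using temperedWeight.norm_le_exp_add_ae hε hRpos.le hRneg
end

section
/- Let $z:\mathbb{R}\to\mathbb{R}$ be continuous, let $\epsilon\in(0,1]$, and define the shifted process $z_{-1}(s)=z(s-1)$. Define $m_{1\epsilon}=e^{2\epsilon\max_{s\in[-1,0]}|z(s)|}$ and $M_\epsilon=\int_{-\infty}^0 e^{2s+2\epsilon|\int_s^0 z|+2\epsilon|z(s)|}ds$, and define $M_\epsilon(\theta_{-1})$ analogously with $z$ replaced by $z_{-1}$. Then $M_\epsilon(\theta_{-1}) \le e^2\, m_{1\epsilon}\, M_\epsilon$. -/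
open MeasureTheory Real intervalIntegral

/-!
Substituting `s ↦ s + 1` turns `∫_s^0 z(ς - 1) dς` into `∫_{s-1}^0 z - ∫_{-1}^0 z`, and
`|∫_{-1}^0 z| ≤ max_{[-1,0]} |z|`. Hence the integrand of `M_ε(θ_{-1})` at `s` is at most
`e² m_{1ε}` times the integrand of `M_ε` at `s - 1`, and integrating over `s ≤ 0` covers only
the part `s ≤ -1` of the (nonnegative) integrand of `M_ε`.
-/

/-- The integrand of `M_ε`. -/
noncomputable def expWeight (z : ℝ → ℝ) (ε s : ℝ) : ℝ :=
  exp (2 * s + 2 * ε * |∫ ς in s..0, z ς| + 2 * ε * |z s|)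

lemma abs_intervalIntegral_le_mul_sSup {z : ℝ → ℝ} {a b : ℝ} (hz : ContinuousOn z (Set.Icc a b))
    (hab : a ≤ b) : |∫ ς in a..b, z ς| ≤ (b - a) * sSup ((fun s => |z s|) '' Set.Icc a b) := by
  have hbdd : BddAbove ((fun s => |z s|) '' Set.Icc a b) :=
    (isCompact_Icc.image_of_continuousOn hz.abs).bddAbove
  have := norm_integral_le_of_norm_le_const (a := a) (b := b) (f := z) fun x hx => by
    rw [Set.uIoc_of_le hab] at hx
    exact le_csSup hbdd ⟨x, Set.Ioc_subset_Icc_self hx, rfl⟩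
  simpa [abs_of_nonneg (sub_nonneg.2 hab), mul_comm] using this

lemma expWeight_pos (z : ℝ → ℝ) (ε s : ℝ) : 0 < expWeight z ε s := exp_pos _

lemma abs_intervalIntegral_comp_sub_le {z : ℝ → ℝ} {s h : ℝ}
    (h₁ : IntervalIntegrable z volume (s - h) 0) (h₂ : IntervalIntegrable z volume (-h) 0) :
    |∫ ς in s..0, z (ς - h)| ≤ |∫ ς in (s - h)..0, z ς| + |∫ ς in (-h)..0, z ς| := by
  have hshift : ∫ ς in s..0, z (ς - h) = (∫ ς in (s - h)..0, z ς) - ∫ ς in (-h)..0, z ς := by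
    rw [integral_comp_sub_right, zero_sub, eq_sub_iff_add_eq]
    exact integral_add_adjacent_intervals (h₁.trans h₂.symm) h₂
  rw [hshift]
  exact abs_sub _ _

lemma expWeight_comp_sub_le {z : ℝ → ℝ} (hz : Continuous z) {ε : ℝ} (hε : 0 ≤ ε) (s h : ℝ) :
    expWeight (fun t => z (t - h)) ε s ≤
      exp (2 * h) * exp (2 * ε * |∫ ς in (-h)..0, z ς|) * expWeight z ε (s - h) := by
  have hint := abs_intervalIntegral_comp_sub_le (s := s) (h := h)
    (hz.intervalIntegrable _ _) (hz.intervalIntegrable _ _)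
  rw [expWeight, expWeight, ← exp_add, ← exp_add, exp_le_exp]
  linarith [mul_le_mul_of_nonneg_left hint (by linarith : (0:ℝ) ≤ 2 * ε)]

lemma setIntegral_Iic_comp_sub_right (g : ℝ → ℝ) (a h : ℝ) :
    ∫ s in Set.Iic a, g (s - h) = ∫ s in Set.Iic (a - h), g s := by
  rw [← (measurePreserving_sub_right volume h).setIntegral_preimage_emb
    (measurableEmbedding_subRight h) g (Set.Iic (a - h)), Set.preimage_sub_const_Iic,
    sub_add_cancel]

section Translation

variable {g : ℝ → ℝ} {a h : ℝ}

lemma integrableOn_Iic_comp_sub_right_iff :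
    IntegrableOn (fun s => g (s - h)) (Set.Iic a) ↔ IntegrableOn g (Set.Iic (a - h)) := by
  rw [← (measurePreserving_sub_right volume h).integrableOn_comp_preimage
    (measurableEmbedding_subRight h) (s := Set.Iic (a - h)), Set.preimage_sub_const_Iic,
    sub_add_cancel]
  rfl

lemma setIntegral_Iic_comp_sub_le (hg : IntegrableOn g (Set.Iic a)) (hg0 : ∀ s ≤ a, 0 ≤ g s)
    (hh : 0 ≤ h) : ∫ s in Set.Iic a, g (s - h) ≤ ∫ s in Set.Iic a, g s := by
  rw [setIntegral_Iic_comp_sub_right]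
  exact setIntegral_mono_set hg ((ae_restrict_iff' measurableSet_Iic).2 (.of_forall hg0))
    (Set.Iic_subset_Iic.2 (by linarith)).eventuallyLE

end Translation

theorem stmt_10_general (z : ℝ → ℝ) (hz : Continuous z) (ε : ℝ) (hε : ε ∈ Set.Ioc (0:ℝ) 1)
    (hint : IntegrableOn
      (fun s => Real.exp (2 * s + 2 * ε * |∫ ς in s..(0:ℝ), z ς| + 2 * ε * |z s|))
      (Set.Iic (0:ℝ))) :
    (∫ s in Set.Iic (0:ℝ),
        Real.exp (2 * s + 2 * ε * |∫ ς in s..(0:ℝ), z (ς - 1)| + 2 * ε * |z (s - 1)|)) ≤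
      Real.exp 2 * Real.exp (2 * ε * sSup ((fun s => |z s|) '' Set.Icc (-1:ℝ) 0)) *
        ∫ s in Set.Iic (0:ℝ),
          Real.exp (2 * s + 2 * ε * |∫ ς in s..(0:ℝ), z ς| + 2 * ε * |z s|) := by
  set M := sSup ((fun s => |z s|) '' Set.Icc (-1:ℝ) 0)
  have hε0 : 0 ≤ ε := hε.1.le
  have hzM : |∫ ς in (-1:ℝ)..0, z ς| ≤ M := by
    simpa using abs_intervalIntegral_le_mul_sSup hz.continuousOn (by norm_num : (-1:ℝ) ≤ 0)
  have hpoint (s : ℝ) : expWeight (fun t => z (t - 1)) ε s ≤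
      exp 2 * exp (2 * ε * M) * expWeight z ε (s - 1) := by
    refine (expWeight_comp_sub_le hz hε0 s 1).trans ?_
    have := expWeight_pos z ε (s - 1)
    gcongr
    norm_num
  have hint_shift : IntegrableOn (fun s => expWeight z ε (s - 1)) (Set.Iic 0) :=
    integrableOn_Iic_comp_sub_right_iff.2 (hint.mono_set (Set.Iic_subset_Iic.2 (by norm_num)))
  calc ∫ s in Set.Iic (0:ℝ), expWeight (fun t => z (t - 1)) ε s
      ≤ ∫ s in Set.Iic (0:ℝ), exp 2 * exp (2 * ε * M) * expWeight z ε (s - 1) :=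
        integral_mono_of_nonneg (Filter.Eventually.of_forall fun s => (expWeight_pos _ ε s).le)
          (hint_shift.const_mul _) (Filter.Eventually.of_forall hpoint)
    _ = exp 2 * exp (2 * ε * M) * ∫ s in Set.Iic (0:ℝ), expWeight z ε (s - 1) :=
        integral_const_mul _ _
    _ ≤ exp 2 * exp (2 * ε * M) * ∫ s in Set.Iic (0:ℝ), expWeight z ε s := by
        refine mul_le_mul_of_nonneg_left ?_ (by positivity)
        exact setIntegral_Iic_comp_sub_le hint (fun s _ => (expWeight_pos z ε s).le) zero_le_one

/-- Shift estimate (3.33): with `z₋₁(s) = z(s-1)`,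
`m_{1ε} = e^{2ε max_{[-1,0]}|z|}` and
`M_ε = ∫_{-∞}^0 e^{2s + 2ε|∫_s^0 z| + 2ε|z(s)|} ds`, one has
`M_ε(θ_{-1}) ≤ e² m_{1ε} M_ε`. -/
theorem stmt_10 (z : ℝ → ℝ) (hz : Continuous z) (ε : ℝ) (hε : ε ∈ Set.Ioc (0:ℝ) 1)
    (hint : IntegrableOn
      (fun s => Real.exp (2 * s + 2 * ε * |∫ ς in s..(0:ℝ), z ς| + 2 * ε * |z s|))
      (Set.Iic (0:ℝ)))
    (hint' : IntegrableOn
      (fun s => Real.exp (2 * s + 2 * ε * |∫ ς in s..(0:ℝ), z (ς - 1)| + 2 * ε * |z (s - 1)|))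
      (Set.Iic (0:ℝ))) :
    (∫ s in Set.Iic (0:ℝ),
        Real.exp (2 * s + 2 * ε * |∫ ς in s..(0:ℝ), z (ς - 1)| + 2 * ε * |z (s - 1)|)) ≤
      Real.exp 2 * Real.exp (2 * ε * sSup ((fun s => |z s|) '' Set.Icc (-1:ℝ) 0)) *
        ∫ s in Set.Iic (0:ℝ),
          Real.exp (2 * s + 2 * ε * |∫ ς in s..(0:ℝ), z ς| + 2 * ε * |z s|) :=
  stmt_10_general z hz ε hε hint
end
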